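/- Let p be an odd prime, H the Heisenberg group of order p³, α ∈ ℤ/pℤ, and ∘ the operation g ∘ h = g · h · [g,h]^α. Then the commutator of g and h in the group (H, ∘) equals [g,h]^{1+2α}; in particular (H, ∘) is abelian if and only if α = −1/2 in ℤ/pℤ. -/

import Mathlib

/-- The Heisenberg group of order `p³`,
`H = ⟨u, v, k : uᵖ = vᵖ = kᵖ = 1, [u,v] = k, [u,k] = [v,k] = 1⟩`,
modelled on triples `⟨i, j, q⟩` representing the normal form `uⁱ vʲ k^q`. -/
@[ext] structure Heis (p : ℕ) where
  x : ZMod p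
  y : ZMod p
  z : ZMod p

namespace Heis

variable {p : ℕ}

instance : Mul (Heis p) := ⟨fun a b => ⟨a.x + b.x, a.y + b.y, a.z + b.z - a.y * b.x⟩⟩
instance : One (Heis p) := ⟨⟨0, 0, 0⟩⟩
instance : Inv (Heis p) := ⟨fun a => ⟨-a.x, -a.y, -a.z - a.y * a.x⟩⟩

lemma mul_def (a b : Heis p) :
    a * b = ⟨a.x + b.x, a.y + b.y, a.z + b.z - a.y * b.x⟩ := rfl
lemma one_def : (1 : Heis p) = ⟨0, 0, 0⟩ := rfl
lemma inv_def (a : Heis p) : a⁻¹ = ⟨-a.x, -a.y, -a.z - a.y * a.x⟩ := rfl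

instance : Group (Heis p) where
  mul_assoc a b c := by ext <;> simp [mul_def] <;> ring
  one_mul a := by ext <;> simp [mul_def, one_def]
  mul_one a := by ext <;> simp [mul_def, one_def]
  inv_mul_cancel a := by ext <;> simp [mul_def, one_def, inv_def] <;> ring

/-- The generator `u`. -/
def u : Heis p := ⟨1, 0, 0⟩
/-- The generator `v`. -/
def v : Heis p := ⟨0, 1, 0⟩
/-- The generator `k = [u, v]`. -/
def k : Heis p := ⟨0, 0, 1⟩

end Heis

open scoped commutatorElement

/-!
When all commutators are central, `g ∘ h = g h [g,h]ⁿ` only shuffles central factors: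
`(g ∘ h) ∘ g⁻¹ = [g,h]^(2n+1) h`, so the `∘`-commutator is `[g,h]^(2n+1)`, and likewise
`g ∘ h = h ∘ g ↔ [g,h]^(2n+1) = 1`. In the Heisenberg group commutators are central and
`[u,v] = k` has order `p`, so this exponent only matters through `1 + 2α ∈ ℤ/pℤ`, which
vanishes iff `α = -1/2` because `2` is a unit modulo odd `p`.
-/

section
variable {G : Type*} [Group G]

def twistMul (n : ℕ) (g h : G) : G := g * h * ⁅g, h⁆ ^ n

lemma commutatorElement_central_mul {z : G} (hz : ∀ x, Commute z x) (a b : G) :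
    ⁅z * a, b⁆ = ⁅a, b⁆ :=
  calc ⁅z * a, b⁆ = z * (a * b * a⁻¹) * z⁻¹ * b⁻¹ := by rw [commutatorElement_def]; group
    _ = a * b * a⁻¹ * z * z⁻¹ * b⁻¹ := by rw [(hz _).eq]
    _ = ⁅a, b⁆ := by rw [commutatorElement_def]; group

lemma twistMul_central_mul_inv {z : G} (hz : ∀ x, Commute z x) (n : ℕ) (h : G) :
    twistMul n (z * h) h⁻¹ = z := by
  rw [twistMul, commutatorElement_central_mul hz, commutatorElement_def]; group

variable (hc : ∀ g h x : G, Commute ⁅g, h⁆ x)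
include hc

lemma twistMul_twistMul_inv (n : ℕ) (g h : G) :
    twistMul n (twistMul n g h) g⁻¹ = ⁅g, h⁆ ^ (2 * n + 1) * h := by
  have hcn x : Commute (⁅g, h⁆ ^ n) x := (hc g h x).pow_left n
  have hgh : ⁅g * h * ⁅g, h⁆ ^ n, g⁻¹⁆ = ⁅g, h⁆ := by
    rw [← (hcn _).eq, commutatorElement_central_mul hcn, commutatorElement_def,
      commutatorElement_def]
    group
  calc g * h * ⁅g, h⁆ ^ n * g⁻¹ * ⁅g * h * ⁅g, h⁆ ^ n, g⁻¹⁆ ^ n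
      = g * h * g⁻¹ * ⁅g, h⁆ ^ n * ⁅g, h⁆ ^ n := by
        rw [hgh, mul_assoc (g * h), (hcn _).eq, ← mul_assoc]
    _ = ⁅g, h⁆ * (h * ⁅g, h⁆ ^ (2 * n)) := by
        rw [← MulAut.conj_apply, conj_eq_commutatorElement_mul, two_mul, pow_add]; group
    _ = ⁅g, h⁆ ^ (2 * n + 1) * h := by
        rw [← mul_assoc, (hc g h h).eq, mul_assoc, ← pow_succ', ((hc g h h).pow_left _).eq]

lemma twistMul_commutator (n : ℕ) (g h : G) :
    twistMul n (twistMul n (twistMul n g h) g⁻¹) h⁻¹ = ⁅g, h⁆ ^ (2 * n + 1) := by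
  rw [twistMul_twistMul_inv hc, twistMul_central_mul_inv fun x => (hc g h x).pow_left _]

lemma twistMul_comm_iff (n : ℕ) (g h : G) :
    twistMul n g h = twistMul n h g ↔ ⁅g, h⁆ ^ (2 * n + 1) = 1 := by
  have hgh : twistMul n g h = h * g * ⁅g, h⁆ ^ (n + 1) := by
    have hcomm : g * h = ⁅g, h⁆ * (h * g) := by rw [commutatorElement_def]; group
    rw [twistMul, hcomm, (hc g h _).eq, mul_assoc, ← pow_succ']
  have hhg : twistMul n h g = h * g * (⁅g, h⁆ ^ n)⁻¹ := by
    rw [twistMul, ← commutatorElement_inv, inv_pow]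
  rw [hgh, hhg, mul_right_inj, eq_inv_iff_mul_eq_one, ← pow_add, two_mul, add_right_comm]

end

lemma ZMod.one_add_two_mul_eq_zero_iff {p : ℕ} (hp : Odd p) (a : ZMod p) :
    1 + 2 * a = 0 ↔ a = -2⁻¹ := by
  have h2 : (2 : ZMod p) * 2⁻¹ = 1 := by
    refine ZMod.mul_inv_of_unit 2 ?_
    exact_mod_cast (ZMod.isUnit_iff_coprime 2 p).mpr hp.coprime_two_left
  constructor
  · intro h; linear_combination 2⁻¹ * h - a * h2
  · intro h; linear_combination 2 * h - h2

namespace Heis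

variable {p : ℕ}

lemma central_pow (c : ZMod p) (n : ℕ) : (⟨0, 0, c⟩ : Heis p) ^ n = ⟨0, 0, n * c⟩ := by
  induction n with
  | zero => ext <;> simp [one_def]
  | succ n ih => rw [pow_succ, ih]; ext <;> simp [mul_def]; ring

lemma commutatorElement_eq (g h : Heis p) : ⁅g, h⁆ = ⟨0, 0, g.x * h.y - g.y * h.x⟩ := by
  ext <;> simp [commutatorElement_def, mul_def, inv_def]; ring

lemma commute_commutatorElement (g h x : Heis p) : Commute ⁅g, h⁆ x := by
  rw [commutatorElement_eq]; ext <;> simp [mul_def]; ring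

lemma commutatorElement_pow_eq_pow (g h : Heis p) {m n : ℕ} (hmn : (m : ZMod p) = n) :
    ⁅g, h⁆ ^ m = ⁅g, h⁆ ^ n := by
  rw [commutatorElement_eq, central_pow, central_pow, hmn]

lemma commutatorElement_u_v : ⁅(u : Heis p), (v : Heis p)⁆ = k := by
  simp [commutatorElement_eq, u, v, k]

lemma forall_commutatorElement_pow_eq_one_iff (n : ℕ) :
    (∀ g h : Heis p, ⁅g, h⁆ ^ n = 1) ↔ (n : ZMod p) = 0 := by
  constructor
  · intro h
    simpa [commutatorElement_u_v, k, central_pow, one_def] using h u v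
  · intro hn g h
    rw [commutatorElement_eq, central_pow, hn, zero_mul, one_def]

end Heis

theorem stmt17_general (p : ℕ) (hodd : Odd p) (α : ZMod p) :
    let circ : Heis p → Heis p → Heis p := fun g h => g * h * ⁅g, h⁆ ^ α.val
    (∀ g h : Heis p,
      circ (circ (circ g h) g⁻¹) h⁻¹ = ⁅g, h⁆ ^ (1 + 2 * α).val) ∧
    ((∀ g h : Heis p, circ g h = circ h g) ↔ α = -(2⁻¹ : ZMod p)) := by
  intro circ
  have : NeZero p := ⟨hodd.pos.ne'⟩
  have hexp : ((2 * α.val + 1 : ℕ) : ZMod p) = ((1 + 2 * α).val : ℕ) := by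
    push_cast [ZMod.natCast_zmod_val]
    ring
  refine ⟨fun g h => ?_, ?_⟩
  · rw [← Heis.commutatorElement_pow_eq_pow g h hexp]
    exact twistMul_commutator Heis.commute_commutatorElement α.val g h
  · calc (∀ g h : Heis p, circ g h = circ h g)
        ↔ ∀ g h : Heis p, ⁅g, h⁆ ^ (2 * α.val + 1) = 1 :=
          forall₂_congr fun g h => twistMul_comm_iff Heis.commute_commutatorElement α.val g h
      _ ↔ ((2 * α.val + 1 : ℕ) : ZMod p) = 0 := Heis.forall_commutatorElement_pow_eq_one_iff _
      _ ↔ 1 + 2 * α = 0 := by rw [hexp, ZMod.natCast_zmod_val]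
      _ ↔ α = -2⁻¹ := ZMod.one_add_two_mul_eq_zero_iff hodd α

/-- For `p` an odd prime, `H` the Heisenberg group of order `p³`, `α ∈ ℤ/pℤ`,
and `∘` the operation `g ∘ h = g·h·[g,h]^α`: the commutator of `g` and `h` in
the group `(H, ∘)` (inverses in `(H,∘)` coincide with those in `(H,·)`) equals
`[g,h]^(1+2α)`; in particular `(H, ∘)` is abelian iff `α = -1/2` in `ℤ/pℤ`. -/
theorem stmt17 (p : ℕ) (hp : p.Prime) (hodd : Odd p) (α : ZMod p) :
    let circ : Heis p → Heis p → Heis p := fun g h => g * h * ⁅g, h⁆ ^ α.val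
    (∀ g h : Heis p,
      circ (circ (circ g h) g⁻¹) h⁻¹ = ⁅g, h⁆ ^ (1 + 2 * α).val) ∧
    ((∀ g h : Heis p, circ g h = circ h g) ↔ α = -(2⁻¹ : ZMod p)) :=
  stmt17_general p hodd α
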